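/- arXiv:1809.07133 — 3 statements merged into one kernel-verified Lean document; each statement's English description precedes it below -/
import Mathlib

section
/- The top-aggregation function α_v(s) = M_v(s) - M_{-v}(s), where M_v(s) = max{0, v₁s₁, ..., vₙsₙ}, is Lipschitz-continuous on [0,1]ⁿ with respect to the maximum norm with Lipschitz constant min{2, Σᵢ |vᵢ|}. -/
/-!
Write `d = s - s'`. Each coordinate term `vᵢ sᵢ = vᵢ s'ᵢ + vᵢ dᵢ` exceeds the corresponding term
at `s'` by at most `|dᵢ| ≤ ‖d‖`, so `M_v` and `M_{-v}` are `1`-Lipschitz and `α_v` is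
`2`-Lipschitz. Since `s ≥ 0`, a term with `vᵢ ≤ 0` is dominated by the `0` in the maximum, so
`M_v(s) - M_v(s') ≤ ∑ vᵢ⁺ |dᵢ|`; adding the same bound for `-v` with `s, s'` swapped gives
`∑ |vᵢ| |dᵢ| ≤ (∑ |vᵢ|) ‖d‖`.
-/

noncomputable def Mtop {n : ℕ} (v s : Fin n → ℝ) : ℝ :=
  sSup (insert (0:ℝ) (Set.range fun i => v i * s i))

section Mtop

variable {n : ℕ} (v s s' : Fin n → ℝ)

lemma Mtop_bddAbove : BddAbove (insert (0:ℝ) (Set.range fun i => v i * s i)) :=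
  ((Set.finite_range _).insert 0).bddAbove

lemma Mtop_nonneg : 0 ≤ Mtop v s :=
  le_csSup (Mtop_bddAbove v s) (Set.mem_insert _ _)

lemma mul_le_Mtop (i : Fin n) : v i * s i ≤ Mtop v s :=
  le_csSup (Mtop_bddAbove v s) (Set.mem_insert_of_mem _ ⟨i, rfl⟩)

lemma posPart_mul_le_Mtop (i : Fin n) : (v i)⁺ * s i ≤ Mtop v s := by
  rcases le_total 0 (v i) with h | h
  · rw [posPart_eq_self.2 h]
    exact mul_le_Mtop v s i
  · rw [posPart_eq_zero.2 h, zero_mul]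
    exact Mtop_nonneg v s

variable {v s} in
lemma Mtop_le {c : ℝ} (h0 : 0 ≤ c) (h : ∀ i, v i * s i ≤ c) : Mtop v s ≤ c := by
  refine csSup_le ⟨0, Set.mem_insert _ _⟩ ?_
  rintro x (rfl | ⟨i, rfl⟩)
  · exact h0
  · exact h i

lemma abs_sub_apply_le_norm (i : Fin n) : |s i - s' i| ≤ ‖s - s'‖ := by
  simpa only [dist_eq_norm, Real.norm_eq_abs] using dist_le_pi_dist s s' i

variable {v s s'}

lemma Mtop_sub_Mtop_le_norm (hv : ∀ i, |v i| ≤ 1) : Mtop v s - Mtop v s' ≤ ‖s - s'‖ := by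
  rw [sub_le_iff_le_add]
  refine Mtop_le (add_nonneg (norm_nonneg _) (Mtop_nonneg v s')) fun i => ?_
  calc v i * s i = v i * (s i - s' i) + v i * s' i := by ring
    _ ≤ |s i - s' i| + Mtop v s' := by
        gcongr
        · calc v i * (s i - s' i) ≤ |v i * (s i - s' i)| := le_abs_self _
            _ = |v i| * |s i - s' i| := abs_mul _ _
            _ ≤ 1 * |s i - s' i| := by gcongr; exact hv i
            _ = |s i - s' i| := one_mul _
        · exact mul_le_Mtop v s' i
    _ ≤ ‖s - s'‖ + Mtop v s' := by gcongr; exact abs_sub_apply_le_norm s s' i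

lemma Mtop_sub_Mtop_le_sum (hs : 0 ≤ s) :
    Mtop v s - Mtop v s' ≤ ∑ i, (v i)⁺ * |s i - s' i| := by
  rw [sub_le_iff_le_add]
  have hsum : 0 ≤ ∑ i, (v i)⁺ * |s i - s' i| :=
    Finset.sum_nonneg fun i _ => mul_nonneg (posPart_nonneg _) (abs_nonneg _)
  refine Mtop_le (add_nonneg hsum (Mtop_nonneg v s')) fun i => ?_
  calc v i * s i ≤ (v i)⁺ * s i := mul_le_mul_of_nonneg_right (le_posPart _) (hs i)
    _ = (v i)⁺ * (s i - s' i) + (v i)⁺ * s' i := by ring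
    _ ≤ (v i)⁺ * |s i - s' i| + Mtop v s' := by
        gcongr
        · exact le_abs_self _
        · exact posPart_mul_le_Mtop v s' i
    _ ≤ ∑ j, (v j)⁺ * |s j - s' j| + Mtop v s' := by
        gcongr
        exact Finset.single_le_sum (f := fun j => (v j)⁺ * |s j - s' j|)
          (fun j _ => mul_nonneg (posPart_nonneg _) (abs_nonneg _)) (Finset.mem_univ i)

lemma Mtop_sub_Mtop_neg_sub_le (hv : ∀ i, |v i| ≤ 1) (hs : 0 ≤ s) (hs' : 0 ≤ s') :
    (Mtop v s - Mtop (-v) s) - (Mtop v s' - Mtop (-v) s') ≤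
      min 2 (∑ i, |v i|) * ‖s - s'‖ := by
  have hnv : ∀ i, |(-v) i| ≤ 1 := fun i => by simpa only [Pi.neg_apply, abs_neg] using hv i
  rw [min_mul_of_nonneg _ _ (norm_nonneg _), le_min_iff]
  constructor
  · have h₁ := Mtop_sub_Mtop_le_norm (s := s) (s' := s') hv
    have h₂ := Mtop_sub_Mtop_le_norm (s := s') (s' := s) hnv
    rw [norm_sub_rev] at h₂
    linarith
  · have h₁ := Mtop_sub_Mtop_le_sum (v := v) (s' := s') hs
    have h₂ := Mtop_sub_Mtop_le_sum (v := -v) (s' := s) hs'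
    have hterm : ∀ i, (v i)⁺ * |s i - s' i| + ((-v) i)⁺ * |s' i - s i| ≤ |v i| * ‖s - s'‖ := by
      intro i
      rw [abs_sub_comm (s' i), ← add_mul, Pi.neg_apply, posPart_neg, posPart_add_negPart]
      exact mul_le_mul_of_nonneg_left (abs_sub_apply_le_norm s s' i) (abs_nonneg _)
    have hsum := Finset.sum_le_sum fun i (_ : i ∈ Finset.univ) => hterm i
    rw [Finset.sum_add_distrib, ← Finset.sum_mul] at hsum
    linarith

end Mtop

theorem top_aggregation_lipschitz {n : ℕ} (v : Fin n → ℝ)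
    (hv : ∀ i, v i = -1 ∨ v i = 0 ∨ v i = 1)
    (s s' : Fin n → ℝ)
    (hs : ∀ i, s i ∈ Set.Icc (0:ℝ) 1) (hs' : ∀ i, s' i ∈ Set.Icc (0:ℝ) 1) :
    |(Mtop v s - Mtop (-v) s) - (Mtop v s' - Mtop (-v) s')| ≤
      min 2 (∑ i, |v i|) * ‖s - s'‖ := by
  have hv₁ : ∀ i, |v i| ≤ 1 := fun i => by rcases hv i with h | h | h <;> norm_num [h]
  have h₀ : 0 ≤ s := fun i => (hs i).1
  have h₀' : 0 ≤ s' := fun i => (hs' i).1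
  rw [abs_sub_le_iff]
  exact ⟨Mtop_sub_Mtop_neg_sub_le hv₁ h₀ h₀',
    norm_sub_rev s s' ▸ Mtop_sub_Mtop_neg_sub_le hv₁ h₀' h₀⟩
end

section
/- The Euler-based influence function ι_w(s) = 1 - (1-w²)/(1 + w·eˢ) is Lipschitz-continuous on ℝ with Lipschitz constant 1/4, for any w ∈ [0,1]. -/
/-!
The derivative of `ι_w` is `(1 - w²) · u / (1 + u)²` with `u = w eˢ ≥ 0`. For `w ∈ [0, 1]` the
factor `1 - w²` lies in `[0, 1]`, and `u / (1 + u)² ≤ 1/4` is AM-GM, `4u ≤ (1 + u)²`; the mean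
value theorem turns this derivative bound into the Lipschitz bound.
-/

open Real

noncomputable def eulerInfluence (w s : ℝ) : ℝ :=
  1 - (1 - w ^ 2) / (1 + w * exp s)

lemma div_one_add_sq_le_quarter {u : ℝ} (hu : 0 ≤ u) : u / (1 + u) ^ 2 ≤ 1 / 4 := by
  rw [div_le_iff₀ (by positivity)]
  linarith [four_mul_le_sq_add 1 u]

namespace eulerInfluence

lemma hasDerivAt {w : ℝ} (s : ℝ) (hs : 1 + w * exp s ≠ 0) :
    HasDerivAt (eulerInfluence w)
      ((1 - w ^ 2) * (w * exp s / (1 + w * exp s) ^ 2)) s := by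
  have hden : HasDerivAt (fun x ↦ 1 + w * exp x) (w * exp s) s :=
    ((hasDerivAt_exp s).const_mul w).const_add 1
  exact (((hasDerivAt_const s (1 - w ^ 2)).div hden hs).const_sub 1).congr_deriv (by ring)

lemma abs_deriv_le {w : ℝ} (hw : w ∈ Set.Icc (0 : ℝ) 1) (s : ℝ) :
    |deriv (eulerInfluence w) s| ≤ 1 / 4 := by
  obtain ⟨hw0, hw1⟩ := hw
  set u := w * exp s
  have hu : 0 ≤ u := by positivity
  have hcoef : 0 ≤ 1 - w ^ 2 := sub_nonneg.2 (pow_le_one₀ hw0 hw1)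
  have hquot : 0 ≤ u / (1 + u) ^ 2 := by positivity
  rw [(hasDerivAt s (by positivity)).deriv, abs_of_nonneg (mul_nonneg hcoef hquot)]
  calc (1 - w ^ 2) * (u / (1 + u) ^ 2) ≤ 1 * (u / (1 + u) ^ 2) := by
        gcongr; exact sub_le_self 1 (sq_nonneg w)
    _ ≤ 1 / 4 := by rw [one_mul]; exact div_one_add_sq_le_quarter hu

lemma lipschitzWith {w : ℝ} (hw : w ∈ Set.Icc (0 : ℝ) 1) :
    LipschitzWith (1 / 4) (eulerInfluence w) := by
  refine lipschitzWith_of_nnnorm_deriv_le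
    (fun s ↦ (hasDerivAt s (by have := hw.1; positivity)).differentiableAt) fun s ↦ ?_
  rw [← NNReal.coe_le_coe, coe_nnnorm, norm_eq_abs]
  simpa using abs_deriv_le hw s

end eulerInfluence

theorem euler_influence_lipschitz (w : ℝ) (hw : w ∈ Set.Icc (0:ℝ) 1) (s t : ℝ) :
    |(1 - (1 - w ^ 2) / (1 + w * Real.exp s)) -
     (1 - (1 - w ^ 2) / (1 + w * Real.exp t))| ≤ (1 / 4) * |s - t| := by
  simpa only [eulerInfluence, dist_eq, NNReal.coe_div, NNReal.coe_one, NNReal.coe_ofNat] using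
    (eulerInfluence.lipschitzWith hw).dist_le_mul s t
end

section
/- The p-Max(κ) influence function ι_w(s) = w - w·h(-s/κ) + (1-w)·h(s/κ), with h(x) = max{0,x}^p/(1+max{0,x}^p), is Lipschitz-continuous on ℝ with Lipschitz constant (p/κ)·max{w, 1-w}, for any w ∈ [0,1], κ > 0, and natural number p ≥ 1. -/
/-!
The map `y ↦ y^p/(1+y^p)` is `p`-Lipschitz on `[0, ∞)`, because `|a^p - b^p| ≤ p·max(a,b)^(p-1)·|a - b|` and `max(a,b)^(p-1) ≤ (1+a^p)(1+b^p)`.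
On `s ≤ 0` only the first term of `ι_w` varies and on `s ≥ 0` only the second, so `ι_w` is
`(p/κ)·w`-Lipschitz on the negative and `(p/κ)·(1-w)`-Lipschitz on the positive half-line.
Passing through `0` glues the two halves with the larger constant.
-/

lemma pow_pred_le_one_add_pow {x : ℝ} (hx : 0 ≤ x) (n : ℕ) : x ^ (n - 1) ≤ 1 + x ^ n := by
  rcases le_total x 1 with hx1 | hx1
  · linarith [pow_le_one₀ hx hx1 (n := n - 1), pow_nonneg hx n]
  · linarith [pow_le_pow_right₀ hx1 (Nat.sub_le n 1)]

lemma abs_pow_div_one_add_pow_sub_le {a b : ℝ} (ha : 0 ≤ a) (hb : 0 ≤ b) (n : ℕ) :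
    |a ^ n / (1 + a ^ n) - b ^ n / (1 + b ^ n)| ≤ n * |a - b| := by
  have han : 0 ≤ a ^ n := pow_nonneg ha n
  have hbn : 0 ≤ b ^ n := pow_nonneg hb n
  have hmax : max a b ^ (n - 1) ≤ (1 + a ^ n) * (1 + b ^ n) := by
    refine (pow_pred_le_one_add_pow (le_max_of_le_left ha) n).trans ?_
    rcases le_total a b with hab | hab
    · rw [max_eq_right hab]; nlinarith
    · rw [max_eq_left hab]; nlinarith
  have hdiff : a ^ n / (1 + a ^ n) - b ^ n / (1 + b ^ n)
      = (a ^ n - b ^ n) / ((1 + a ^ n) * (1 + b ^ n)) := by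
    field_simp
    ring
  have hden : 0 < (1 + a ^ n) * (1 + b ^ n) := by positivity
  rw [hdiff, abs_div, abs_of_pos hden, div_le_iff₀ hden]
  calc |a ^ n - b ^ n| ≤ |a - b| * n * max |a| |b| ^ (n - 1) := abs_pow_sub_pow_le a b n
    _ = n * |a - b| * max a b ^ (n - 1) := by rw [abs_of_nonneg ha, abs_of_nonneg hb]; ring
    _ ≤ n * |a - b| * ((1 + a ^ n) * (1 + b ^ n)) := by gcongr

/-- The paper's `h`. -/
noncomputable def rectifiedHill (p : ℕ) (x : ℝ) : ℝ := max 0 x ^ p / (1 + max 0 x ^ p)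

noncomputable def pMaxInfluence (w κ : ℝ) (p : ℕ) (s : ℝ) : ℝ :=
  w - w * rectifiedHill p (-s / κ) + (1 - w) * rectifiedHill p (s / κ)

lemma rectifiedHill_of_nonpos (p : ℕ) {x : ℝ} (hx : x ≤ 0) :
    rectifiedHill p x = rectifiedHill p 0 := by
  simp only [rectifiedHill, max_eq_left hx, max_self]

lemma abs_rectifiedHill_sub_le (p : ℕ) (x y : ℝ) :
    |rectifiedHill p x - rectifiedHill p y| ≤ p * |x - y| := by
  calc |rectifiedHill p x - rectifiedHill p y| ≤ p * |max 0 x - max 0 y| :=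
        abs_pow_div_one_add_pow_sub_le (le_max_left 0 x) (le_max_left 0 y) p
    _ ≤ p * |x - y| := by
        rw [max_comm 0 x, max_comm 0 y]
        exact mul_le_mul_of_nonneg_left (abs_max_sub_max_le_abs x y 0) p.cast_nonneg

lemma abs_rectifiedHill_div_sub_le (p : ℕ) {κ : ℝ} (hκ : 0 ≤ κ) (s t : ℝ) :
    |rectifiedHill p (s / κ) - rectifiedHill p (t / κ)| ≤ p / κ * |s - t| := by
  calc |rectifiedHill p (s / κ) - rectifiedHill p (t / κ)| ≤ p * |s / κ - t / κ| :=
        abs_rectifiedHill_sub_le p _ _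
    _ = p / κ * |s - t| := by rw [← sub_div, abs_div, abs_of_nonneg hκ]; ring

lemma abs_sub_le_of_abs_sub_le_Iic_Ici {f : ℝ → ℝ} {a K : ℝ}
    (hIic : ∀ x ≤ a, ∀ y ≤ a, |f x - f y| ≤ K * |x - y|)
    (hIci : ∀ x ≥ a, ∀ y ≥ a, |f x - f y| ≤ K * |x - y|) :
    ∀ x y, |f x - f y| ≤ K * |x - y| := by
  have hcross : ∀ x ≤ a, ∀ y ≥ a, |f x - f y| ≤ K * |x - y| := by
    intro x hx y hy
    calc |f x - f y| ≤ |f x - f a| + |f a - f y| := abs_sub_le _ _ _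
      _ ≤ K * |x - a| + K * |a - y| := add_le_add (hIic x hx a le_rfl) (hIci a le_rfl y hy)
      _ = K * |x - y| := by
        rw [abs_of_nonpos (by linarith), abs_of_nonpos (by linarith),
          abs_of_nonpos (by linarith)]
        ring
  intro x y
  rcases le_total x a with hx | hx <;> rcases le_total y a with hy | hy
  · exact hIic x hx y hy
  · exact hcross x hx y hy
  · rw [abs_sub_comm, abs_sub_comm x]; exact hcross y hy x hx
  · exact hIci x hx y hy

section

variable {w κ : ℝ} (p : ℕ)

lemma abs_pMaxInfluence_sub_le_of_nonpos (hw : 0 ≤ w) (hκ : 0 ≤ κ) {s t : ℝ}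
    (hs : s ≤ 0) (ht : t ≤ 0) :
    |pMaxInfluence w κ p s - pMaxInfluence w κ p t| ≤ p / κ * w * |s - t| := by
  have hnonpos : ∀ {x : ℝ}, x ≤ 0 → rectifiedHill p (x / κ) = rectifiedHill p 0 := fun hx =>
    rectifiedHill_of_nonpos p (div_nonpos_of_nonpos_of_nonneg hx hκ)
  have hdiff : pMaxInfluence w κ p s - pMaxInfluence w κ p t
      = w * (rectifiedHill p (-t / κ) - rectifiedHill p (-s / κ)) := by
    simp only [pMaxInfluence, hnonpos hs, hnonpos ht]
    ring
  calc |pMaxInfluence w κ p s - pMaxInfluence w κ p t|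
      = w * |rectifiedHill p (-t / κ) - rectifiedHill p (-s / κ)| := by
        rw [hdiff, abs_mul, abs_of_nonneg hw]
    _ ≤ w * (p / κ * |-t - -s|) := by gcongr; exact abs_rectifiedHill_div_sub_le p hκ _ _
    _ = p / κ * w * |s - t| := by rw [neg_sub_neg]; ring

lemma abs_pMaxInfluence_sub_le_of_nonneg (hw : w ≤ 1) (hκ : 0 ≤ κ) {s t : ℝ}
    (hs : 0 ≤ s) (ht : 0 ≤ t) :
    |pMaxInfluence w κ p s - pMaxInfluence w κ p t| ≤ p / κ * (1 - w) * |s - t| := by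
  have hneg : ∀ {x : ℝ}, 0 ≤ x → rectifiedHill p (-x / κ) = rectifiedHill p 0 := fun hx =>
    rectifiedHill_of_nonpos p (div_nonpos_of_nonpos_of_nonneg (neg_nonpos.mpr hx) hκ)
  have hdiff : pMaxInfluence w κ p s - pMaxInfluence w κ p t
      = (1 - w) * (rectifiedHill p (s / κ) - rectifiedHill p (t / κ)) := by
    simp only [pMaxInfluence, hneg hs, hneg ht]
    ring
  calc |pMaxInfluence w κ p s - pMaxInfluence w κ p t|
      = (1 - w) * |rectifiedHill p (s / κ) - rectifiedHill p (t / κ)| := by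
        rw [hdiff, abs_mul, abs_of_nonneg (sub_nonneg.mpr hw)]
    _ ≤ (1 - w) * (p / κ * |s - t|) := by gcongr; exact abs_rectifiedHill_div_sub_le p hκ _ _
    _ = p / κ * (1 - w) * |s - t| := by ring

end

theorem pMax_influence_lipschitz_general (w κ : ℝ) (p : ℕ)
    (hw : w ∈ Set.Icc (0:ℝ) 1) (hκ : 0 < κ) (s t : ℝ) :
    |(w - w * ((max 0 (-s / κ)) ^ p / (1 + (max 0 (-s / κ)) ^ p)) +
        (1 - w) * ((max 0 (s / κ)) ^ p / (1 + (max 0 (s / κ)) ^ p))) -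
     (w - w * ((max 0 (-t / κ)) ^ p / (1 + (max 0 (-t / κ)) ^ p)) +
        (1 - w) * ((max 0 (t / κ)) ^ p / (1 + (max 0 (t / κ)) ^ p)))| ≤
      ((p : ℝ) / κ) * max w (1 - w) * |s - t| := by
  change |pMaxInfluence w κ p s - pMaxInfluence w κ p t| ≤ _
  have hpκ : 0 ≤ (p : ℝ) / κ := by positivity
  refine abs_sub_le_of_abs_sub_le_Iic_Ici (a := 0) ?_ ?_ s t
  · intro x hx y hy
    refine (abs_pMaxInfluence_sub_le_of_nonpos p hw.1 hκ.le hx hy).trans ?_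
    gcongr
    exact le_max_left _ _
  · intro x hx y hy
    refine (abs_pMaxInfluence_sub_le_of_nonneg p hw.2 hκ.le hx hy).trans ?_
    gcongr
    exact le_max_right _ _

theorem pMax_influence_lipschitz (w κ : ℝ) (p : ℕ)
    (hw : w ∈ Set.Icc (0:ℝ) 1) (hκ : 0 < κ) (hp : 1 ≤ p) (s t : ℝ) :
    |(w - w * ((max 0 (-s / κ)) ^ p / (1 + (max 0 (-s / κ)) ^ p)) +
        (1 - w) * ((max 0 (s / κ)) ^ p / (1 + (max 0 (s / κ)) ^ p))) -
     (w - w * ((max 0 (-t / κ)) ^ p / (1 + (max 0 (-t / κ)) ^ p)) +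
        (1 - w) * ((max 0 (t / κ)) ^ p / (1 + (max 0 (t / κ)) ^ p)))| ≤
      ((p : ℝ) / κ) * max w (1 - w) * |s - t| :=
  pMax_influence_lipschitz_general w κ p hw hκ s t
end
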